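/- arXiv:1312.0222 — 9 statements merged into one kernel-verified Lean document; each statement's English description precedes it below -/
import Mathlib

section
/- Let cl be a totally degenerated closure operator on P. Then for every X ⊆ P, cl(X) = cl(∅) ∪ ⋃ {ℰ(y) : y ∈ P ∖ cl(∅) and there exists x ∈ X with cl({y}) ⊆ cl({x})}. -/
open Set

variable {P : Type*}

/-- A closure operator: Monotonicity (extensivity + monotone), Finite character, Transitivity. -/
structure IsClosure (cl : Set P → Set P) : Prop where
  le_cl : ∀ X : Set P, X ⊆ cl X
  mono : ∀ ⦃X Y : Set P⦄, X ⊆ Y → cl X ⊆ cl Y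
  finChar : ∀ X : Set P, cl X = ⋃₀ {S | ∃ X₀, X₀ ⊆ X ∧ X₀.Finite ∧ S = cl X₀}
  idem : ∀ X : Set P, cl (cl X) = cl X

/-- Totally degenerated: every finite nonempty set has an element whose closure is the whole closure. -/
def TotDeg (cl : Set P → Set P) : Prop :=
  ∀ X : Set P, X.Finite → X.Nonempty → ∃ x ∈ X, cl X = cl {x}

/-- The ℰ-neighbourhood of `x`. -/
def EClass (cl : Set P → Set P) (x : P) : Set P := {y | cl {x} = cl {y}}

/-- cl(X) = cl(∅) ∪ ⋃ {ℰ(y) : y ∈ P ∖ cl(∅), ∃ x ∈ X, cl({y}) ⊆ cl({x})}. -/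
theorem totDeg_closure_description
    (cl : Set P → Set P) (hcl : IsClosure cl) (htd : TotDeg cl) (X : Set P) :
    cl X = cl ∅ ∪ ⋃ y ∈ {y : P | y ∉ cl ∅ ∧ ∃ x ∈ X, cl {y} ⊆ cl {x}}, EClass cl y := by
  ext p
  constructor
  · intro hp
    rw [hcl.finChar] at hp
    obtain ⟨S, ⟨X₀, hX₀X, hfin, rfl⟩, hpS⟩ := hp
    by_cases hp0 : p ∈ cl ∅
    · exact Or.inl hp0
    · rcases X₀.eq_empty_or_nonempty with rfl | hne
      · exact absurd hpS hp0
      · obtain ⟨x, hxX₀, hclx⟩ := htd X₀ hfin hne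
        rw [hclx] at hpS
        have hsub : cl {p} ⊆ cl {x} := by
          have : ({p} : Set P) ⊆ cl {x} := by
            intro z hz; rcases hz with rfl; exact hpS
          calc cl {p} ⊆ cl (cl {x}) := hcl.mono this
            _ = cl {x} := hcl.idem _
        refine Or.inr ?_
        simp only [mem_iUnion]
        exact ⟨p, ⟨hp0, x, hX₀X hxX₀, hsub⟩, rfl⟩
  · intro hp
    rcases hp with hp | hp
    · exact hcl.mono (empty_subset X) hp
    · simp only [mem_iUnion] at hp
      obtain ⟨y, ⟨-, x, hxX, hsub⟩, hpE⟩ := hp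
      have hpy : p ∈ cl {y} := by
        rw [hpE]; exact hcl.le_cl _ rfl
      have : cl {x} ⊆ cl X := hcl.mono (by intro z hz; rcases hz with rfl; exact hxX)
      exact this (hsub hpy)
end

section
/- Let cl be a totally degenerated closure operator on P and let a₁, a₂ ∈ P ∖ cl(∅). The pair (a₁, a₂) is cl-free (i.e., a₁ ∉ cl(∅) and a₂ ∉ cl({a₁})) if and only if cl({a₁}) is a proper subset of cl({a₂}). -/
open Set

variable {P : Type*}

/-- A pair (a₁, a₂) of elements outside cl(∅) is cl-free iff cl({a₁}) ⊊ cl({a₂}). -/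
theorem pair_clFree_iff_ssubset
    (cl : Set P → Set P) (hcl : IsClosure cl) (htd : TotDeg cl)
    (a₁ a₂ : P) (h₁ : a₁ ∉ cl ∅) (h₂ : a₂ ∉ cl ∅) :
    a₂ ∉ cl {a₁} ↔ cl {a₁} ⊂ cl {a₂} := by
  constructor
  · intro hne
    obtain ⟨x, hx, hcleq⟩ := htd {a₁, a₂} (Set.toFinite _) ⟨a₁, by simp⟩
    rcases hx with rfl | rfl
    · exact absurd (hcleq ▸ hcl.le_cl {x, a₂} (by simp)) hne
    · refine ⟨hcleq ▸ hcl.mono (by simp), fun hsub => hne ?_⟩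
      exact hsub (hcl.le_cl {x} rfl)
  · intro ⟨_, hns⟩ hmem
    exact hns <| (hcl.idem {a₁}) ▸ hcl.mono (Set.singleton_subset_iff.2 hmem)
end

section
/- Let cl be a totally degenerated closure operator on P and a₁, …, aₙ ∈ P ∖ cl(∅). The sequence (a₁, …, aₙ) is cl-free if and only if cl({a₁}) ⊊ cl({a₂}) ⊊ … ⊊ cl({aₙ}). -/
open Set

variable {P : Type*}

lemma cl_singleton_subset (cl : Set P → Set P) (hcl : IsClosure cl)
    {x : P} {Y : Set P} (hx : x ∈ cl Y) : cl {x} ⊆ cl Y := by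
  have : cl {x} ⊆ cl (cl Y) := hcl.mono (by simpa using hx)
  simpa [hcl.idem] using this

lemma cl_comparable (cl : Set P → Set P) (hcl : IsClosure cl) (htd : TotDeg cl)
    (x y : P) : cl {x} ⊆ cl {y} ∨ cl {y} ⊆ cl {x} := by
  obtain ⟨z, hz, hcl2⟩ := htd {x, y} (Set.toFinite _) ⟨x, by simp⟩
  rcases hz with rfl | rfl
  · right
    have : cl {y} ⊆ cl {z, y} := hcl.mono (by simp)
    rwa [hcl2] at this
  · left
    have : cl {x} ⊆ cl {x, z} := hcl.mono (by simp)
    rwa [hcl2] at this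

/-- A finite sequence outside cl(∅) is cl-free iff the singleton closures form a
strictly increasing chain. -/
theorem clFree_iff_strict_chain
    (cl : Set P → Set P) (hcl : IsClosure cl) (htd : TotDeg cl)
    (n : ℕ) (a : Fin n → P) (ha : ∀ i, a i ∉ cl ∅) :
    (∀ i : Fin n, a i ∉ cl (a '' {j | j < i})) ↔
      (∀ i j : Fin n, i < j → cl {a i} ⊂ cl {a j}) := by
  constructor
  · intro hfree i j hij
    have hmem : a i ∈ a '' {k | k < j} := ⟨i, hij, rfl⟩
    have hij' : a j ∉ cl {a i} := fun h => hfree j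
      (cl_singleton_subset cl hcl (hcl.le_cl _ hmem) h)
    rcases cl_comparable cl hcl htd (a i) (a j) with h | h
    · exact ⟨h, fun h' => hij' (h' (hcl.le_cl _ (by simp)))⟩
    · exact absurd (h (hcl.le_cl _ (by simp))) hij'
  · intro hchain i hmem
    rcases Nat.eq_zero_or_pos i.val with h0 | h0
    · have : ({j : Fin n | j < i} : Set (Fin n)) = ∅ := by
        ext j; simp [Fin.lt_def, h0, Nat.not_lt_zero]
      rw [this] at hmem
      simp at hmem
      exact ha i hmem
    · have hne : (a '' {j | j < i}).Nonempty :=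
        ⟨a ⟨0, i.pos⟩, ⟨⟨0, i.pos⟩, h0, rfl⟩⟩
      obtain ⟨x, hx, hclx⟩ := htd _ (Set.toFinite _) hne
      obtain ⟨k, hk, rfl⟩ := hx
      rw [hclx] at hmem
      have h1 : cl {a i} ⊆ cl {a k} := cl_singleton_subset cl hcl hmem
      exact (hchain k i hk).2 h1
end

section
/- Let cl be a totally degenerated closure operator on P. A cl-free sequence (aᵢ)_{i ∈ I} indexed by a linear order (I, <) is maximal (cannot be extended to a longer cl-free sequence indexed by a linear order extending I) if and only if {cl({aᵢ}) : i ∈ I} = {cl({x}) : x ∈ P ∖ cl(∅)}; consequently any two maximal cl-free sequences have isomorphic index orders, both isomorphic to ({cl({x}) : x ∈ P ∖ cl(∅)}, ⊊). -/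
open Set

variable {P : Type*}

/-- A sequence indexed by a linear order is cl-free. -/
def ClFree {Q : Type*} (cl : Set Q → Set Q) {I : Type*} [LinearOrder I] (a : I → Q) : Prop :=
  (∀ i, a i ∉ cl ∅) ∧ ∀ i, a i ∉ cl (a '' {j | j < i})

/-- A cl-free sequence is maximal if it cannot be extended to a longer cl-free
sequence indexed by a linear order extending its index order. -/
def MaximalClFree {Q : Type u} (cl : Set Q → Set Q) {I : Type u} [LinearOrder I]
    (a : I → Q) : Prop :=
  ClFree cl a ∧ ¬ ∃ (J : Type u) (_ : LinearOrder J) (b : J → Q) (f : I → J),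
    StrictMono f ∧ (∀ i, b (f i) = a i) ∧ ¬ Function.Surjective f ∧ ClFree cl b

namespace MCFAux

variable {Q : Type*} {cl : Set Q → Set Q}

lemma cl_singleton_subset (hcl : IsClosure cl) {x y : Q} (h : x ∈ cl {y}) :
    cl {x} ⊆ cl {y} := by
  have h1 : ({x} : Set Q) ⊆ cl {y} := by simpa using h
  calc cl {x} ⊆ cl (cl {y}) := hcl.mono h1
    _ = cl {y} := hcl.idem _

lemma mem_cl_iff (hcl : IsClosure cl) (htd : TotDeg cl) {X : Set Q} {y : Q} :
    y ∈ cl X ↔ y ∈ cl ∅ ∨ ∃ x ∈ X, y ∈ cl {x} := by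
  constructor
  · intro h
    rw [hcl.finChar X] at h
    obtain ⟨S, ⟨X₀, hX₀X, hfin, rfl⟩, hy⟩ := h
    rcases X₀.eq_empty_or_nonempty with rfl | hne
    · exact Or.inl hy
    · obtain ⟨x, hx, hEq⟩ := htd X₀ hfin hne
      exact Or.inr ⟨x, hX₀X hx, hEq ▸ hy⟩
  · rintro (h | ⟨x, hx, h⟩)
    · exact hcl.mono (empty_subset X) h
    · exact hcl.mono (by simpa using hx) h

lemma comparable (hcl : IsClosure cl) (htd : TotDeg cl) (x y : Q) :
    cl {x} ⊆ cl {y} ∨ cl {y} ⊆ cl {x} := by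
  obtain ⟨z, hz, hEq⟩ := htd {x, y} (by simp) ⟨x, by simp⟩
  rcases hz with rfl | rfl
  · right
    have : y ∈ cl {z} := hEq ▸ hcl.le_cl _ (by simp)
    exact cl_singleton_subset hcl this
  · left
    have : x ∈ cl {z} := hEq ▸ hcl.le_cl _ (by simp)
    exact cl_singleton_subset hcl this

variable {I : Type*} [LinearOrder I]

lemma clFree_strictMono (hcl : IsClosure cl) (htd : TotDeg cl) {a : I → Q}
    (h : ClFree cl a) : StrictMono (fun i => cl ({a i} : Set Q)) := by
  intro i j hij
  have hni : a j ∉ cl {a i} := by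
    intro hmem
    have him : a i ∈ a '' {k | k < j} := ⟨i, hij, rfl⟩
    exact h.2 j (hcl.mono (singleton_subset_iff.2 him) hmem)
  rcases comparable hcl htd (a i) (a j) with hsub | hsub
  · refine lt_of_le_of_ne hsub (fun e => hni ?_)
    have e' : cl ({a i} : Set Q) = cl {a j} := e
    rw [e']; exact hcl.le_cl _ rfl
  · exact absurd (hsub (hcl.le_cl _ rfl)) hni

lemma strictMono_clFree (hcl : IsClosure cl) (htd : TotDeg cl) {a : I → Q}
    (h0 : ∀ i, a i ∉ cl ∅) (hm : StrictMono (fun i => cl ({a i} : Set Q))) :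
    ClFree cl a := by
  refine ⟨h0, fun i hmem => ?_⟩
  rw [mem_cl_iff hcl htd] at hmem
  rcases hmem with h | ⟨x, ⟨j, hj, rfl⟩, hmem⟩
  · exact h0 i h
  · exact (hm hj).not_ge (cl_singleton_subset hcl hmem)

end MCFAux

/-- A cl-free sequence is maximal iff its singleton closures exhaust all singleton
closures of elements outside cl(∅); consequently the index orders of any two maximal
cl-free sequences are isomorphic, both isomorphic to the chain of singleton closures. -/
theorem maximal_clFree_characterization {Q : Type u}
    (cl : Set Q → Set Q) (hcl : IsClosure cl) (htd : TotDeg cl) :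
    (∀ (I : Type u) [LinearOrder I] (a : I → Q),
      MaximalClFree cl a ↔
        ClFree cl a ∧ {S | ∃ i, S = cl {a i}} = {S | ∃ x, x ∉ cl ∅ ∧ S = cl {x}}) ∧
    (∀ (I I' : Type u) [LinearOrder I] [LinearOrder I'] (a : I → Q) (a' : I' → Q),
      MaximalClFree cl a → MaximalClFree cl a' → Nonempty (I ≃o I')) ∧
    (∀ (I : Type u) [LinearOrder I] (a : I → Q), MaximalClFree cl a →
      Nonempty (I ≃o {S : Set Q // ∃ x, x ∉ cl ∅ ∧ S = cl {x}})) := by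
  classical
  have key : ∀ (I : Type u) [LinearOrder I] (a : I → Q),
      MaximalClFree cl a ↔
        ClFree cl a ∧ {S | ∃ i, S = cl {a i}} = {S | ∃ x, x ∉ cl ∅ ∧ S = cl {x}} := by
    intro I _ a
    constructor
    · rintro ⟨hfree, hmax⟩
      refine ⟨hfree, ?_⟩
      ext S
      constructor
      · rintro ⟨i, rfl⟩; exact ⟨a i, hfree.1 i, rfl⟩
      · rintro ⟨x, hx, rfl⟩
        by_contra hnot
        apply hmax
        have h : ∀ i, cl ({a i} : Set Q) ≠ cl {x} := fun i e => hnot ⟨i, e.symm⟩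
        have hsm := MCFAux.clFree_strictMono hcl htd hfree
        set J := {S : Set Q // S = cl {x} ∨ ∃ i, S = cl {a i}} with hJ
        have hsing : ∀ S : J, ∃ s, S.1 = cl {s} ∧ s ∉ cl ∅ := by
          rintro ⟨S, (rfl | ⟨i, rfl⟩)⟩
          exacts [⟨x, rfl, hx⟩, ⟨a i, rfl, hfree.1 i⟩]
        letI : LinearOrder J :=
          { (inferInstance : PartialOrder J) with
            le_total := by
              intro S T
              obtain ⟨s, hs, -⟩ := hsing S
              obtain ⟨t, ht, -⟩ := hsing T
              have hc := MCFAux.comparable hcl htd s t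
              rw [← hs, ← ht] at hc
              exact hc
            toDecidableLE := Classical.decRel _ }
        let g : J → Q := fun S => if hS : ∃ i, S.1 = cl {a i} then a hS.choose else x
        have hg1 : ∀ S : J, cl {g S} = S.1 := by
          intro S
          by_cases hS : ∃ i, S.1 = cl {a i}
          · simp only [g, dif_pos hS]; exact hS.choose_spec.symm
          · simp only [g, dif_neg hS]
            rcases S.2 with h' | h'
            · exact h'.symm
            · exact absurd h' hS
        have hg2 : ∀ (S : J) (i : I), S.1 = cl {a i} → g S = a i := by
          intro S i hSi
          have hS : ∃ i, S.1 = cl {a i} := ⟨i, hSi⟩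
          simp only [g, dif_pos hS]
          have hspec := hS.choose_spec
          have heq : cl ({a hS.choose} : Set Q) = cl {a i} := by rw [← hspec, hSi]
          exact congrArg a (hsm.injective heq)
        have hg0 : ∀ S : J, g S ∉ cl ∅ := by
          intro S hmem
          obtain ⟨s, hs, hsn⟩ := hsing S
          have h1 : cl {g S} ⊆ cl ∅ := by
            have h2 : ({g S} : Set Q) ⊆ cl ∅ := by simpa using hmem
            calc cl {g S} ⊆ cl (cl ∅) := hcl.mono h2
              _ = cl ∅ := hcl.idem _
          have hsmem : s ∈ S.1 := hs ▸ hcl.le_cl {s} rfl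
          have : s ∈ cl {g S} := (hg1 S).symm ▸ hsmem
          exact hsn (h1 this)
        refine ⟨J, inferInstance, g, fun i => ⟨cl {a i}, Or.inr ⟨i, rfl⟩⟩, ?_, ?_, ?_, ?_⟩
        · intro i j hij
          exact Subtype.mk_lt_mk.2 (hsm hij)
        · intro i; exact hg2 _ i rfl
        · intro hsurj
          obtain ⟨i, hi⟩ := hsurj ⟨cl {x}, Or.inl rfl⟩
          exact h i (congrArg Subtype.val hi)
        · refine MCFAux.strictMono_clFree hcl htd hg0 ?_
          intro S T hST
          show cl {g S} < cl {g T}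
          rw [hg1 S, hg1 T]
          exact Subtype.coe_lt_coe.2 hST
    · rintro ⟨hfree, hset⟩
      refine ⟨hfree, ?_⟩
      rintro ⟨J, _, b, f, hf, hbf, hns, hbfree⟩
      simp only [Function.Surjective, not_forall] at hns
      obtain ⟨j₀, hj₀⟩ := hns
      push_neg at hj₀
      have hb0 : b j₀ ∉ cl ∅ := hbfree.1 j₀
      have hmem : cl ({b j₀} : Set Q) ∈ {S | ∃ i, S = cl {a i}} := by
        rw [hset]; exact ⟨b j₀, hb0, rfl⟩
      obtain ⟨i, hi⟩ := hmem
      rcases lt_trichotomy j₀ (f i) with hlt | heq | hgt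
      · apply hbfree.2 (f i)
        have h1 : b (f i) ∈ cl {b j₀} := by
          rw [hbf i, hi]
          exact hcl.le_cl _ rfl
        have him : b j₀ ∈ b '' {k | k < f i} := ⟨j₀, hlt, rfl⟩
        exact hcl.mono (singleton_subset_iff.2 him) h1
      · exact hj₀ i heq.symm
      · apply hbfree.2 j₀
        have h1 : b j₀ ∈ cl {b (f i)} := by
          rw [hbf i, ← hi]
          exact hcl.le_cl _ rfl
        have him : b (f i) ∈ b '' {k | k < j₀} := ⟨f i, hgt, rfl⟩
        exact hcl.mono (singleton_subset_iff.2 him) h1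
  have part3 : ∀ (I : Type u) [LinearOrder I] (a : I → Q), MaximalClFree cl a →
      Nonempty (I ≃o {S : Set Q // ∃ x, x ∉ cl ∅ ∧ S = cl {x}}) := by
    intro I _ a hmax
    obtain ⟨hfree, hset⟩ := (key I a).1 hmax
    have hsm := MCFAux.clFree_strictMono hcl htd hfree
    let e : I → {S : Set Q // ∃ x, x ∉ cl ∅ ∧ S = cl {x}} :=
      fun i => ⟨cl {a i}, a i, hfree.1 i, rfl⟩
    have hmono : StrictMono e := fun i j hij => Subtype.mk_lt_mk.2 (hsm hij)
    have hsurj : Function.Surjective e := by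
      rintro ⟨S, x, hx, rfl⟩
      have hmem : cl ({x} : Set Q) ∈ {S | ∃ i, S = cl {a i}} := by
        rw [hset]; exact ⟨x, hx, rfl⟩
      obtain ⟨i, hi⟩ := hmem
      exact ⟨i, Subtype.ext hi.symm⟩
    exact ⟨StrictMono.orderIsoOfSurjective e hmono hsurj⟩
  refine ⟨key, ?_, part3⟩
  intro I I' _ _ a a' h h'
  obtain ⟨e⟩ := part3 I a h
  obtain ⟨e'⟩ := part3 I' a' h'
  exact ⟨e.trans e'.symm⟩
end

section
/- Let cl be a totally degenerated closure operator on P, and suppose ≤ is a partial order on P ∖ cl(∅) such that every cl-free pair is strictly increasing (i.e., if a₂ ∉ cl({a₁}) with a₁, a₂ ∉ cl(∅), then a₁ < a₂). Then for every a ∈ P ∖ cl(∅) the class ℰ(a) is ≤-convex: if x, x' ∈ ℰ(a), y ∈ P ∖ cl(∅), and x < y < x', then y ∈ ℰ(a). -/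
open Set

variable {P : Type*}

/-- If a partial order on P ∖ cl(∅) orders every cl-free pair strictly increasingly,
then each ℰ-class is convex with respect to it. -/
theorem eclass_convex
    (cl : Set P → Set P) (hcl : IsClosure cl) (htd : TotDeg cl)
    (le : P → P → Prop)
    (hrefl : ∀ x, x ∉ cl ∅ → le x x)
    (hantisymm : ∀ x y, x ∉ cl ∅ → y ∉ cl ∅ → le x y → le y x → x = y)
    (htrans : ∀ x y z, x ∉ cl ∅ → y ∉ cl ∅ → z ∉ cl ∅ → le x y → le y z → le x z)
    (hfree : ∀ a₁ a₂, a₁ ∉ cl ∅ → a₂ ∉ cl ∅ → a₂ ∉ cl {a₁} → le a₁ a₂ ∧ a₁ ≠ a₂) :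
    ∀ a, a ∉ cl ∅ → ∀ x ∈ EClass cl a, ∀ x' ∈ EClass cl a, ∀ y, y ∉ cl ∅ →
      le x y → x ≠ y → le y x' → y ≠ x' → y ∈ EClass cl a := by
  intro a ha x hx x' hx' y hy hxy hxney hyx' hynex'
  -- members of EClass a are not in cl ∅
  have hmem : ∀ z ∈ EClass cl a, z ∉ cl ∅ := by
    intro z hz hz0
    apply ha
    have h1 : cl {z} ⊆ cl ∅ := by
      have : ({z} : Set P) ⊆ cl ∅ := singleton_subset_iff.2 hz0
      simpa [hcl.idem] using hcl.mono this
    exact h1 (hz ▸ hcl.le_cl {a} rfl)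
  have hx0 : x ∉ cl ∅ := hmem x hx
  have hx'0 : x' ∉ cl ∅ := hmem x' hx'
  -- x ∈ cl {y}
  have hxy' : x ∈ cl {y} := by
    by_contra h
    obtain ⟨h1, h2⟩ := hfree y x hy hx0 h
    exact hxney (hantisymm x y hx0 hy hxy h1)
  -- y ∈ cl {x'}
  have hyx'' : y ∈ cl {x'} := by
    by_contra h
    obtain ⟨h1, h2⟩ := hfree x' y hx'0 hy h
    exact hynex' (hantisymm y x' hy hx'0 hyx' h1)
  have sub1 : cl {x} ⊆ cl {y} := by
    have : ({x} : Set P) ⊆ cl {y} := singleton_subset_iff.2 hxy'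
    simpa [hcl.idem] using hcl.mono this
  have sub2 : cl {y} ⊆ cl {x'} := by
    have : ({y} : Set P) ⊆ cl {x'} := singleton_subset_iff.2 hyx''
    simpa [hcl.idem] using hcl.mono this
  have hxE : cl {a} = cl {x} := hx
  have hx'E : cl {a} = cl {x'} := hx'
  show cl {a} = cl {y}
  apply Subset.antisymm
  · rw [hxE]; exact sub1
  · rw [hx'E]; exact sub2
end

section
/- Let cl be a totally degenerated closure operator on P, and suppose ≤ is a partial order on P ∖ cl(∅) such that every cl-free pair is strictly increasing. Then for every a ∈ P ∖ cl(∅) the class ℰ(a) is closed under ≤-incomparability: if b ∈ P ∖ cl(∅) is ≤-incomparable with some element of ℰ(a), then b ∈ ℰ(a). -/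
open Set

variable {P : Type*}

/-- If a partial order on P ∖ cl(∅) orders every cl-free pair strictly increasingly,
then each ℰ-class is closed under incomparability. -/
theorem eclass_closed_under_incomparability
    (cl : Set P → Set P) (hcl : IsClosure cl) (htd : TotDeg cl)
    (le : P → P → Prop)
    (hrefl : ∀ x, x ∉ cl ∅ → le x x)
    (hantisymm : ∀ x y, x ∉ cl ∅ → y ∉ cl ∅ → le x y → le y x → x = y)
    (htrans : ∀ x y z, x ∉ cl ∅ → y ∉ cl ∅ → z ∉ cl ∅ → le x y → le y z → le x z)
    (hfree : ∀ a₁ a₂, a₁ ∉ cl ∅ → a₂ ∉ cl ∅ → a₂ ∉ cl {a₁} → le a₁ a₂ ∧ a₁ ≠ a₂) :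
    ∀ a b, a ∉ cl ∅ → b ∉ cl ∅ →
      (∃ c ∈ EClass cl a, ¬ le b c ∧ ¬ le c b) → b ∈ EClass cl a := by
  rintro a b ha hb ⟨c, hc, hbc, hcb⟩
  have hce : cl {a} = cl {c} := hc
  have hc0 : c ∉ cl ∅ := by
    intro h
    apply ha
    have h1 : cl {c} ⊆ cl ∅ := by
      have : ({c} : Set P) ⊆ cl ∅ := by simpa using h
      have := hcl.mono this
      rwa [hcl.idem] at this
    exact h1 (hce ▸ hcl.le_cl {a} rfl)
  have h1 : c ∈ cl {b} := by
    by_contra h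
    exact hbc (hfree b c hb hc0 h).1
  have h2 : b ∈ cl {c} := by
    by_contra h
    exact hcb (hfree c b hc0 hb h).1
  have hbc' : cl {b} = cl {c} := by
    apply subset_antisymm
    · have : ({b} : Set P) ⊆ cl {c} := by simpa using h2
      have := hcl.mono this; rwa [hcl.idem] at this
    · have : ({c} : Set P) ⊆ cl {b} := by simpa using h1
      have := hcl.mono this; rwa [hcl.idem] at this
  show cl {a} = cl {b}
  rw [hce, hbc']
end

section
/- Let cl be a totally degenerated closure operator on P, and suppose ≤₁ and ≤₂ are two partial orders on P ∖ cl(∅) such that every cl-free sequence is strictly increasing with respect to both. Then ≤₁ and ≤₂ agree on pairs of elements from distinct ℰ-classes: for a, b ∈ P ∖ cl(∅) with ℰ(a) ≠ ℰ(b), a <₁ b if and only if a <₂ b. -/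
open Set

variable {P : Type*}

/-- Two partial orders witnessing that cl-free pairs are strictly increasing agree
on pairs of elements from distinct ℰ-classes. -/
theorem witnessing_orders_agree
    (cl : Set P → Set P) (hcl : IsClosure cl) (htd : TotDeg cl)
    (le₁ le₂ : P → P → Prop)
    (hrefl₁ : ∀ x, x ∉ cl ∅ → le₁ x x)
    (hantisymm₁ : ∀ x y, x ∉ cl ∅ → y ∉ cl ∅ → le₁ x y → le₁ y x → x = y)
    (htrans₁ : ∀ x y z, x ∉ cl ∅ → y ∉ cl ∅ → z ∉ cl ∅ → le₁ x y → le₁ y z → le₁ x z)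
    (hfree₁ : ∀ a₁ a₂, a₁ ∉ cl ∅ → a₂ ∉ cl ∅ → a₂ ∉ cl {a₁} → le₁ a₁ a₂ ∧ a₁ ≠ a₂)
    (hrefl₂ : ∀ x, x ∉ cl ∅ → le₂ x x)
    (hantisymm₂ : ∀ x y, x ∉ cl ∅ → y ∉ cl ∅ → le₂ x y → le₂ y x → x = y)
    (htrans₂ : ∀ x y z, x ∉ cl ∅ → y ∉ cl ∅ → z ∉ cl ∅ → le₂ x y → le₂ y z → le₂ x z)
    (hfree₂ : ∀ a₁ a₂, a₁ ∉ cl ∅ → a₂ ∉ cl ∅ → a₂ ∉ cl {a₁} → le₂ a₁ a₂ ∧ a₁ ≠ a₂) :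
    ∀ a b, a ∉ cl ∅ → b ∉ cl ∅ → EClass cl a ≠ EClass cl b →
      ((le₁ a b ∧ a ≠ b) ↔ (le₂ a b ∧ a ≠ b)) := by
  intro a b ha hb hE
  have hne : cl {a} ≠ cl {b} := by
    intro h
    apply hE
    ext y
    simp only [EClass, mem_setOf_eq, h]
  have key : ∀ x y : P, y ∈ cl {x} → cl {y} ⊆ cl {x} := by
    intro x y hy
    have : ({y} : Set P) ⊆ cl {x} := by simpa using hy
    calc cl {y} ⊆ cl (cl {x}) := hcl.mono this
    _ = cl {x} := hcl.idem _
  by_cases hba : b ∈ cl {a}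
  · have haB : a ∉ cl {b} := by
      intro haB
      exact hne (subset_antisymm (key b a haB) (key a b hba))
    obtain ⟨h1, hne1⟩ := hfree₁ b a hb ha haB
    obtain ⟨h2, hne2⟩ := hfree₂ b a hb ha haB
    constructor
    · rintro ⟨hab, hne'⟩
      exact absurd (hantisymm₁ a b ha hb hab h1) hne'
    · rintro ⟨hab, hne'⟩
      exact absurd (hantisymm₂ a b ha hb hab h2) hne'
  · obtain ⟨h1, hne1⟩ := hfree₁ a b ha hb hba
    obtain ⟨h2, hne2⟩ := hfree₂ a b ha hb hba
    exact ⟨fun _ => ⟨h2, hne1⟩, fun _ => ⟨h1, hne1⟩⟩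
end

section
/- Let P be a set, cl a totally degenerated closure operator on P, and X ⊆ P. Then any two cl-free sequences of elements of X that are maximal among cl-free sequences of elements of X have isomorphic index linear orders. -/
open Set

variable {P : Type*}

/-- A cl-free sequence of elements of X is maximal in X if it cannot be extended to
a longer cl-free sequence of elements of X indexed by an extending linear order. -/
def MaximalClFreeIn {Q : Type u} (cl : Set Q → Set Q) (X : Set Q) {I : Type u}
    [LinearOrder I] (a : I → Q) : Prop :=
  ClFree cl a ∧ Set.range a ⊆ X ∧
    ¬ ∃ (J : Type u) (_ : LinearOrder J) (b : J → Q) (f : I → J),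
      StrictMono f ∧ (∀ i, b (f i) = a i) ∧ ¬ Function.Surjective f ∧
      ClFree cl b ∧ Set.range b ⊆ X

section Aux

variable {Q : Type u} {cl : Set Q → Set Q}

lemma mem_singleton_cl_iff (hcl : IsClosure cl) {x y : Q} :
    x ∈ cl {y} ↔ cl {x} ⊆ cl {y} := by
  constructor
  · intro hx
    have h1 : cl {x} ⊆ cl (cl {y}) := hcl.mono (singleton_subset_iff.2 hx)
    rwa [hcl.idem] at h1
  · intro h
    exact h (hcl.le_cl _ rfl)

lemma cl_mem_cases (hcl : IsClosure cl) (htd : TotDeg cl) {S : Set Q} {y : Q}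
    (hy : y ∈ cl S) : y ∈ cl ∅ ∨ ∃ x ∈ S, y ∈ cl {x} := by
  rw [hcl.finChar S] at hy
  obtain ⟨T, ⟨X₀, hX₀S, hfin, rfl⟩, hyT⟩ := hy
  rcases X₀.eq_empty_or_nonempty with rfl | hne
  · exact Or.inl hyT
  · obtain ⟨x, hx, hcleq⟩ := htd X₀ hfin hne
    exact Or.inr ⟨x, hX₀S hx, hcleq ▸ hyT⟩

lemma total_cl (hcl : IsClosure cl) (htd : TotDeg cl) (x y : Q) :
    x ∈ cl {y} ∨ y ∈ cl {x} := by
  obtain ⟨z, hz, heq⟩ := htd {x, y} ((Set.finite_singleton y).insert x)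
    ⟨x, by simp⟩
  have hx : x ∈ cl {x, y} := hcl.le_cl _ (by simp)
  have hy : y ∈ cl {x, y} := hcl.le_cl _ (by simp)
  rcases hz with rfl | rfl
  · exact Or.inr (heq ▸ hy)
  · exact Or.inl (heq ▸ hx)

lemma clFree_strictMono (hcl : IsClosure cl) (htd : TotDeg cl) {I : Type v} [LinearOrder I]
    {a : I → Q} (hfree : ClFree cl a) : StrictMono (fun i => cl {a i}) := by
  intro i j hij
  show cl {a i} < cl {a j}
  have h1 : a j ∉ cl {a i} := by
    intro h
    refine hfree.2 j (hcl.mono (singleton_subset_iff.2 ?_) h)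
    exact Set.mem_image_of_mem a (show i ∈ {k | k < j} from hij)
  have h2 : a i ∈ cl {a j} := (total_cl hcl htd (a j) (a i)).resolve_left h1
  refine lt_of_le_of_ne ((mem_singleton_cl_iff hcl).1 h2) ?_
  intro heq
  exact h1 (heq ▸ hcl.le_cl {a j} rfl)

/-- A linear order on a chain of sets. -/
noncomputable def chainLinearOrder (T : Set (Set Q))
    (hT : ∀ s ∈ T, ∀ t ∈ T, s ⊆ t ∨ t ⊆ s) : LinearOrder ↥T :=
  { (inferInstance : PartialOrder ↥T) with
    le_total := fun s t => hT s s.2 t t.2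
    toDecidableLE := Classical.decRel _ }

open Classical in
/-- Pick a preimage under `f` if possible, otherwise the default `x`. -/
noncomputable def pick {I : Type v} (a : I → Q) (x : Q) (f : I → Set Q) (S : Set Q) : Q :=
  if h : ∃ i, f i = S then a h.choose else x

lemma pick_eq {I : Type v} (a : I → Q) (x : Q) {f : I → Set Q}
    (hinj : Function.Injective f) (i : I) : pick a x f (f i) = a i := by
  unfold pick
  rw [dif_pos ⟨i, rfl⟩]
  exact congrArg a (hinj (Exists.choose_spec (⟨i, rfl⟩ : ∃ k, f k = f i)))

lemma pick_not {I : Type v} (a : I → Q) (x : Q) {f : I → Set Q} {S : Set Q}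
    (h : ∀ i, f i ≠ S) : pick a x f S = x :=
  dif_neg (fun h' : ∃ i, f i = S => h h'.choose h'.choose_spec)

lemma not_maximal_of_missing (hcl : IsClosure cl) (htd : TotDeg cl) {X : Set Q}
    {I : Type u} [LinearOrder I] {a : I → Q}
    (hfree : ClFree cl a) (hra : Set.range a ⊆ X) {x : Q} (hxX : x ∈ X) (hx0 : x ∉ cl ∅)
    (hmiss : cl {x} ∉ Set.range fun i => cl {a i}) :
    ∃ (J : Type u) (_ : LinearOrder J) (b : J → Q) (g : I → J),
      StrictMono g ∧ (∀ i, b (g i) = a i) ∧ ¬ Function.Surjective g ∧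
      ClFree cl b ∧ Set.range b ⊆ X := by
  classical
  set f : I → Set Q := fun i => cl {a i} with hf
  have hmono : StrictMono f := clFree_strictMono hcl htd hfree
  set T : Set (Set Q) := insert (cl {x}) (Set.range f) with hTdef
  have hform : ∀ S ∈ T, ∃ y, y ∈ X ∧ y ∉ cl ∅ ∧ S = cl {y} := by
    intro S hS
    rcases hS with rfl | ⟨i, rfl⟩
    · exact ⟨x, hxX, hx0, rfl⟩
    · exact ⟨a i, hra ⟨i, rfl⟩, hfree.1 i, rfl⟩
  have hchain : ∀ s ∈ T, ∀ t ∈ T, s ⊆ t ∨ t ⊆ s := by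
    intro s hs t ht
    obtain ⟨y, _, _, rfl⟩ := hform s hs
    obtain ⟨z, _, _, rfl⟩ := hform t ht
    rcases total_cl hcl htd y z with h | h
    · exact Or.inl ((mem_singleton_cl_iff hcl).1 h)
    · exact Or.inr ((mem_singleton_cl_iff hcl).1 h)
  letI : LinearOrder ↥T := chainLinearOrder T hchain
  have hfnex : ∀ i, f i ≠ cl {x} := fun i hi => hmiss ⟨i, hi⟩
  have hbS : ∀ S : ↥T, cl {pick a x f S.val} = S.val ∧ pick a x f S.val ∈ X ∧
      pick a x f S.val ∉ cl ∅ := by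
    intro S
    by_cases h : ∃ i, f i = S.val
    · obtain ⟨i, hi⟩ := h
      rw [← hi, pick_eq a x hmono.injective i]
      exact ⟨rfl, hra ⟨i, rfl⟩, hfree.1 i⟩
    · have hSx : S.val = cl {x} := by
        rcases S.2 with h' | ⟨i, hi⟩
        · exact h'
        · exact absurd ⟨i, hi⟩ h
      rw [hSx, pick_not a x (fun i hi => h ⟨i, hi.trans hSx.symm⟩)]
      exact ⟨rfl, hxX, hx0⟩
  refine ⟨↥T, inferInstance, fun S => pick a x f S.val,
    fun i => ⟨f i, Set.mem_insert_of_mem _ ⟨i, rfl⟩⟩, ?_, ?_, ?_, ⟨?_, ?_⟩, ?_⟩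
  · intro i j hij
    exact (hmono hij : f i < f j)
  · intro i
    exact pick_eq a x hmono.injective i
  · intro hs
    obtain ⟨i, hi⟩ := hs ⟨cl {x}, Set.mem_insert _ _⟩
    exact hfnex i (congrArg Subtype.val hi)
  · exact fun S => (hbS S).2.2
  · intro S hmem
    rcases cl_mem_cases hcl htd hmem with h0 | ⟨y, ⟨K, hK, rfl⟩, hy⟩
    · exact (hbS S).2.2 h0
    · have hKS : K.val < S.val := hK
      have hle : S.val ⊆ K.val := by
        have := (mem_singleton_cl_iff hcl).1 hy
        rwa [(hbS S).1, (hbS K).1] at this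
      exact absurd (lt_of_le_of_lt hle hKS) (lt_irrefl _)
  · rintro _ ⟨S, rfl⟩
    exact (hbS S).2.1

lemma range_cl_eq (hcl : IsClosure cl) (htd : TotDeg cl) {X : Set Q}
    {I : Type u} [LinearOrder I] {a : I → Q} (ha : MaximalClFreeIn cl X a) :
    (Set.range fun i => cl {a i}) = {S | ∃ y, (y ∈ X ∧ y ∉ cl ∅) ∧ S = cl {y}} := by
  apply Set.Subset.antisymm
  · rintro _ ⟨i, rfl⟩
    exact ⟨a i, ⟨ha.2.1 ⟨i, rfl⟩, ha.1.1 i⟩, rfl⟩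
  · rintro S ⟨y, ⟨hyX, hy0⟩, rfl⟩
    by_contra hmiss
    exact ha.2.2 (not_maximal_of_missing hcl htd ha.1 ha.2.1 hyX hy0 hmiss)

end Aux

/-- Any two cl-free sequences of elements of X that are maximal among cl-free
sequences of elements of X have isomorphic index linear orders. -/
theorem maximal_clFree_in_same_order_type {Q : Type u}
    (cl : Set Q → Set Q) (hcl : IsClosure cl) (htd : TotDeg cl) (X : Set Q)
    (I I' : Type u) [LinearOrder I] [LinearOrder I'] (a : I → Q) (a' : I' → Q)
    (ha : MaximalClFreeIn cl X a) (ha' : MaximalClFreeIn cl X a') :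
    Nonempty (I ≃o I') := by
  have e1 := (clFree_strictMono hcl htd ha.1).orderIso _
  have e2 := (clFree_strictMono hcl htd ha'.1).orderIso _
  have heq : (Set.range fun i => cl {a i}) = (Set.range fun i => cl {a' i}) := by
    rw [range_cl_eq hcl htd ha, range_cl_eq hcl htd ha']
  exact ⟨(e1.trans (OrderIso.setCongr _ _ heq)).trans e2.symm⟩
end

section
/- Let cl be a totally degenerated closure operator on P and let a₁, a₂ ∈ P ∖ cl(∅). The following are equivalent: (a) (a₁, a₂) is cl-free; (b) ℰ(a₁) <_cl ℰ(a₂), meaning cl({x}) ⊊ cl({y}) for all x ∈ ℰ(a₁) and y ∈ ℰ(a₂); (c) cl({a₁}) ⊊ cl({y}) for all y ∈ ℰ(a₂); (d) cl({x}) ⊊ cl({a₂}) for all x ∈ ℰ(a₁). -/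
open Set

variable {P : Type*}

lemma clFree_ssubset (cl : Set P → Set P) (hcl : IsClosure cl) (htd : TotDeg cl)
    (a₁ a₂ : P) : (a₂ ∉ cl {a₁}) ↔ cl {a₁} ⊂ cl {a₂} := by
  constructor
  · intro h
    obtain ⟨x, hx, he⟩ := htd {a₁, a₂} (by simp) ⟨a₁, by simp⟩
    rcases hx with h' | h' <;> rw [h'] at he
    · exact absurd (he ▸ hcl.le_cl {a₁, a₂} (by simp)) h
    · refine ⟨he ▸ hcl.mono (by simp), fun hsub => h ?_⟩
      exact hsub (hcl.le_cl {a₂} rfl)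
  · intro h hmem
    have : cl {a₂} ⊆ cl {a₁} := by
      have := hcl.mono (singleton_subset_iff.2 hmem)
      rwa [hcl.idem] at this
    exact h.not_subset this

/-- Equivalent characterizations of cl-freeness of a pair in terms of ℰ-classes. -/
theorem pair_clFree_equivalences
    (cl : Set P → Set P) (hcl : IsClosure cl) (htd : TotDeg cl)
    (a₁ a₂ : P) (h₁ : a₁ ∉ cl ∅) (h₂ : a₂ ∉ cl ∅) :
    ((a₂ ∉ cl {a₁}) ↔ ∀ x ∈ EClass cl a₁, ∀ y ∈ EClass cl a₂, cl {x} ⊂ cl {y}) ∧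
    ((a₂ ∉ cl {a₁}) ↔ ∀ y ∈ EClass cl a₂, cl {a₁} ⊂ cl {y}) ∧
    ((a₂ ∉ cl {a₁}) ↔ ∀ x ∈ EClass cl a₁, cl {x} ⊂ cl {a₂}) := by
  have key := clFree_ssubset cl hcl htd a₁ a₂
  have ha₁ : a₁ ∈ EClass cl a₁ := rfl
  have ha₂ : a₂ ∈ EClass cl a₂ := rfl
  refine ⟨⟨fun h x hx y hy => ?_, fun h => key.2 (h a₁ ha₁ a₂ ha₂)⟩,
    ⟨fun h y hy => ?_, fun h => key.2 (h a₂ ha₂)⟩,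
    ⟨fun h x hx => ?_, fun h => key.2 (h a₁ ha₁)⟩⟩
  · rw [← hx, ← hy]; exact key.1 h
  · rw [← hy]; exact key.1 h
  · rw [← hx]; exact key.1 h
end
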